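/- arXiv:2509.16359 — 2 statements merged into one kernel-verified Lean document; each statement's English description precedes it below -/
import Mathlib

section
/- Fix c > 0 and suppose that (w_r · P̂[t])² ≤ c for every rank r = 1,…,R and every time t = 1,…,τ. Set A = c. Then the per-sample universal loss is bounded by the per-sample loss of the best fixed-rank filter plus a vanishing residual: (1/τ) L_u(τ) ≤ (1/τ) min_{1 ≤ r ≤ R} ℓ_r(τ) + (2A/τ) · ln R. -/
/-- Euclidean inner product on `ℝ^R`. -/
noncomputable def dotp {R : ℕ} (w v : Fin R → ℝ) : ℝ := ∑ i, w i * v i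

/-- Cumulative loss `ℓ_r(t) = Σ_{t'=1}^{t} (w_r · P̂[t'])²` (so `ℓ_r(0) = 0`). -/
noncomputable def cumLoss {R : ℕ} (w : Fin R → Fin R → ℝ) (P : ℕ → Fin R → ℝ)
    (r : Fin R) (t : ℕ) : ℝ :=
  ∑ t' ∈ Finset.Icc 1 t, (dotp (w r) (P t')) ^ 2

/-- Blending weights `μ_r(t) = exp(−ℓ_r(t−1)/(2c)) / Σ_k exp(−ℓ_k(t−1)/(2c))`. -/
noncomputable def blendWeight {R : ℕ} (c : ℝ) (w : Fin R → Fin R → ℝ)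
    (P : ℕ → Fin R → ℝ) (r : Fin R) (t : ℕ) : ℝ :=
  Real.exp (-cumLoss w P r (t - 1) / (2 * c)) /
    ∑ k, Real.exp (-cumLoss w P k (t - 1) / (2 * c))

/-- Universal weight vector `w_u[t] = Σ_r μ_r(t) w_r`. -/
noncomputable def univWeight {R : ℕ} (c : ℝ) (w : Fin R → Fin R → ℝ)
    (P : ℕ → Fin R → ℝ) (t : ℕ) : Fin R → ℝ :=
  ∑ r, blendWeight c w P r t • w r

/-- Universal cumulative loss `L_u(τ) = Σ_{t=1}^{τ} (w_u[t] · P̂[t])²`. -/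
noncomputable def univLoss {R : ℕ} (c : ℝ) (w : Fin R → Fin R → ℝ)
    (P : ℕ → Fin R → ℝ) (τ : ℕ) : ℝ :=
  ∑ t ∈ Finset.Icc 1 τ, (dotp (univWeight c w P t) (P t)) ^ 2

/-!
The squared loss is exp-concave: `x ↦ exp (-x² / (2c))` is concave on `[-√c, √c]`, so by
Jensen the potential `W n = Σ_k exp (-ℓ_k(n) / (2c))` of the exponentially weighted mixture
satisfies `W (n+1) ≤ W n · exp (-(w_u[n+1] · P̂[n+1])² / (2c))`. Since `W 0 = R`, this
gives `exp (-ℓ_r(τ) / (2c)) ≤ W τ ≤ R · exp (-L_u(τ) / (2c))` for every rank `r`; take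
logarithms.
-/

open Finset Real

lemma concaveOn_exp_neg_sq_div {c : ℝ} (hc : 0 < c) :
    ConcaveOn ℝ (Set.Icc (-√c) √c) (fun x : ℝ => exp (-x ^ 2 / (2 * c))) := by
  have hexponent (x : ℝ) : HasDerivAt (fun x : ℝ => -x ^ 2 / (2 * c)) (-x / c) x := by
    refine ((hasDerivAt_pow 2 x).neg.div_const (2 * c)).congr_deriv ?_
    field_simp
    ring
  apply concaveOn_of_hasDerivWithinAt2_nonpos (convex_Icc _ _)
    (f' := fun x => exp (-x ^ 2 / (2 * c)) * (-x / c))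
    (f'' := fun x => exp (-x ^ 2 / (2 * c)) * ((x ^ 2 - c) / c ^ 2))
  · fun_prop
  · exact fun x _ => (hexponent x).exp.hasDerivWithinAt
  · intro x _
    refine (((hexponent x).exp.mul ((hasDerivAt_neg x).div_const c)).congr_deriv ?_)
      |>.hasDerivWithinAt
    field_simp
    ring
  · intro x hx
    rw [interior_Icc, Set.mem_Ioo, ← abs_lt] at hx
    have hsq : x ^ 2 ≤ c := by
      simpa [sq_abs, sq_sqrt hc.le] using pow_le_pow_left₀ (abs_nonneg x) hx.le 2
    exact mul_nonpos_of_nonneg_of_nonpos (exp_pos _).le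
      (div_nonpos_of_nonpos_of_nonneg (by linarith) (sq_nonneg c))

lemma sum_mul_exp_neg_sq_div_le {ι : Type*} {s : Finset ι} {c : ℝ} (hc : 0 < c)
    {μ x : ι → ℝ} (hμ : ∀ k ∈ s, 0 ≤ μ k) (hμ_sum : ∑ k ∈ s, μ k = 1)
    (hx : ∀ k ∈ s, x k ^ 2 ≤ c) :
    ∑ k ∈ s, μ k * exp (-x k ^ 2 / (2 * c)) ≤
      exp (-(∑ k ∈ s, μ k * x k) ^ 2 / (2 * c)) := by
  have hmem : ∀ k ∈ s, x k ∈ Set.Icc (-√c) √c := fun k hk =>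
    abs_le.mp (by simpa [sqrt_sq_eq_abs] using sqrt_le_sqrt (hx k hk))
  simpa using (concaveOn_exp_neg_sq_div hc).le_map_sum hμ hμ_sum hmem

section Potential

variable {R : ℕ} (c : ℝ) (w : Fin R → Fin R → ℝ) (P : ℕ → Fin R → ℝ)

noncomputable def potential (n : ℕ) : ℝ := ∑ k, exp (-cumLoss w P k n / (2 * c))

lemma cumLoss_succ (r : Fin R) (n : ℕ) :
    cumLoss w P r (n + 1) = cumLoss w P r n + dotp (w r) (P (n + 1)) ^ 2 :=
  sum_Icc_succ_top (by omega) _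

lemma univLoss_succ (n : ℕ) :
    univLoss c w P (n + 1) = univLoss c w P n + dotp (univWeight c w P (n + 1)) (P (n + 1)) ^ 2 :=
  sum_Icc_succ_top (by omega) _

lemma potential_zero : potential c w P 0 = R := by
  simp [potential, cumLoss]

lemma potential_pos [NeZero R] (n : ℕ) : 0 < potential c w P n :=
  sum_pos (fun _ _ => exp_pos _) univ_nonempty

lemma exp_neg_cumLoss_div_le_potential (r : Fin R) (n : ℕ) :
    exp (-cumLoss w P r n / (2 * c)) ≤ potential c w P n :=
  single_le_sum (f := fun k => exp (-cumLoss w P k n / (2 * c)))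
    (fun _ _ => (exp_pos _).le) (mem_univ r)

lemma blendWeight_succ (r : Fin R) (n : ℕ) :
    blendWeight c w P r (n + 1) = exp (-cumLoss w P r n / (2 * c)) / potential c w P n := by
  simp [blendWeight, potential]

lemma blendWeight_nonneg (r : Fin R) (t : ℕ) : 0 ≤ blendWeight c w P r t := by
  unfold blendWeight
  positivity

lemma sum_blendWeight [NeZero R] (n : ℕ) : ∑ r, blendWeight c w P r (n + 1) = 1 := by
  simp_rw [blendWeight_succ, ← sum_div]
  exact div_self (potential_pos c w P n).ne'

lemma dotp_univWeight (t : ℕ) (v : Fin R → ℝ) :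
    dotp (univWeight c w P t) v = ∑ r, blendWeight c w P r t * dotp (w r) v := by
  simp only [dotp, univWeight, Finset.sum_apply, Pi.smul_apply, smul_eq_mul, sum_mul, mul_sum]
  rw [sum_comm]
  simp_rw [mul_assoc]

lemma potential_succ_le [NeZero R] (hc : 0 < c) (n : ℕ)
    (hbound : ∀ r, dotp (w r) (P (n + 1)) ^ 2 ≤ c) :
    potential c w P (n + 1) ≤
      potential c w P n * exp (-dotp (univWeight c w P (n + 1)) (P (n + 1)) ^ 2 / (2 * c)) := by
  have hW := (potential_pos c w P n).ne'
  calc potential c w P (n + 1)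
      = potential c w P n *
          ∑ r, blendWeight c w P r (n + 1) * exp (-dotp (w r) (P (n + 1)) ^ 2 / (2 * c)) := by
        rw [potential, mul_sum]
        refine sum_congr rfl fun r _ => ?_
        rw [cumLoss_succ, blendWeight_succ, ← mul_assoc, mul_div_cancel₀ _ hW, ← exp_add]
        congr 1
        ring
    _ ≤ potential c w P n *
          exp (-(∑ r, blendWeight c w P r (n + 1) * dotp (w r) (P (n + 1))) ^ 2 / (2 * c)) := by
        refine mul_le_mul_of_nonneg_left ?_ (potential_pos c w P n).le
        exact sum_mul_exp_neg_sq_div_le hc (fun r _ => blendWeight_nonneg c w P r _)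
          (sum_blendWeight c w P n) (fun r _ => hbound r)
    _ = _ := by rw [dotp_univWeight]

lemma potential_le [NeZero R] (hc : 0 < c) {τ : ℕ}
    (hbound : ∀ r, ∀ t ∈ Icc 1 τ, dotp (w r) (P t) ^ 2 ≤ c) :
    ∀ n ≤ τ, potential c w P n ≤ R * exp (-univLoss c w P n / (2 * c)) := by
  intro n
  induction n with
  | zero => simp [potential_zero, univLoss]
  | succ n ih =>
    intro hn
    calc potential c w P (n + 1)
        ≤ potential c w P n * exp (-dotp (univWeight c w P (n + 1)) (P (n + 1)) ^ 2 / (2 * c)) :=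
          potential_succ_le c w P hc n fun r => hbound r (n + 1) (mem_Icc.mpr ⟨by omega, hn⟩)
      _ ≤ R * exp (-univLoss c w P n / (2 * c)) *
            exp (-dotp (univWeight c w P (n + 1)) (P (n + 1)) ^ 2 / (2 * c)) := by
          gcongr
          exact ih (by omega)
      _ = R * exp (-univLoss c w P (n + 1) / (2 * c)) := by
          rw [mul_assoc, ← exp_add, univLoss_succ]
          congr 2
          ring

lemma univLoss_le_cumLoss_add [NeZero R] (hc : 0 < c) {τ : ℕ}
    (hbound : ∀ r, ∀ t ∈ Icc 1 τ, dotp (w r) (P t) ^ 2 ≤ c) (r : Fin R) :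
    univLoss c w P τ ≤ cumLoss w P r τ + 2 * c * log R := by
  have hR : (0 : ℝ) < R := by exact_mod_cast Nat.pos_of_neZero R
  have h := (exp_neg_cumLoss_div_le_potential c w P r τ).trans
    (potential_le c w P hc hbound τ le_rfl)
  rw [← exp_log hR, ← exp_add, exp_le_exp] at h
  field_simp at h
  linarith

end Potential

theorem universalOSF_regret_bound_general {R : ℕ} (hR : 1 ≤ R) (c : ℝ) (hc : 0 < c)
    (w : Fin R → Fin R → ℝ) (P : ℕ → Fin R → ℝ) (τ : ℕ)
    (hbound : ∀ r : Fin R, ∀ t ∈ Finset.Icc 1 τ, (dotp (w r) (P t)) ^ 2 ≤ c) :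
    (1 / (τ : ℝ)) * univLoss c w P τ ≤
      (1 / (τ : ℝ)) * (⨅ r : Fin R, cumLoss w P r τ) + (2 * c / (τ : ℝ)) * Real.log R := by
  have : NeZero R := ⟨by omega⟩
  have hinf : univLoss c w P τ - 2 * c * log R ≤ ⨅ r, cumLoss w P r τ :=
    le_ciInf fun r => by linarith [univLoss_le_cumLoss_add c w P hc hbound r]
  calc (1 / (τ : ℝ)) * univLoss c w P τ
      = (1 / (τ : ℝ)) * (univLoss c w P τ - 2 * c * log R) + (2 * c / τ) * log R := by ring
    _ ≤ _ := by gcongr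

/-- Theorem 1 of the paper: with `A = c` bounding the squared filter outputs, the
per-sample universal loss is bounded by the per-sample loss of the best fixed-rank
filter plus the residual `(2A/τ) ln R`. -/
theorem universalOSF_regret_bound {R : ℕ} (hR : 1 ≤ R) (c : ℝ) (hc : 0 < c)
    (w : Fin R → Fin R → ℝ) (P : ℕ → Fin R → ℝ) (τ : ℕ) (hτ : 1 ≤ τ)
    (hbound : ∀ r : Fin R, ∀ t ∈ Finset.Icc 1 τ, (dotp (w r) (P t)) ^ 2 ≤ c) :
    (1 / (τ : ℝ)) * univLoss c w P τ ≤
      (1 / (τ : ℝ)) * (⨅ r : Fin R, cumLoss w P r τ) + (2 * c / (τ : ℝ)) * Real.log R :=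
  universalOSF_regret_bound_general hR c hc w P τ hbound
end

section
/- Let R ≥ 1 and let X_1, …, X_R be independent, identically distributed random variables, each exponentially distributed with mean λ > 0 (rate 1/λ). For 1 ≤ r ≤ R let X_(r) denote the r-th order statistic, and let α_r = Σ_{k=R−r+1}^{R} 1/k. Then for every threshold rank r₀ ∈ {1,…,R}, the SAWP estimator X_(r₀)/α_{r₀} is unbiased: E[ X_(r₀) / α_{r₀} ] = λ. -/
open MeasureTheory ProbabilityTheory

/-- The `r`-th order statistic of the sample `x : Fin R → ℝ` (0-indexed: `orderStat x r`
is the `(r+1)`-th smallest value of the sample). -/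
noncomputable def orderStat {R : ℕ} (x : Fin R → ℝ) (r : Fin R) : ℝ := x (Tuple.sort x r)

/-!
Independence turns the law of the sample into the product `ν^⊗R` of the common law `ν`, so
everything is computed on `ℝ^R`. There, `X_(r+1) > t` exactly when at most `r` coordinates
lie in `(-∞, t]`, so the survival function of `X_(r+1)` is the binomial tail
`∑_{j ≤ r} C(R, j) F(t)^j (1 - F(t))^(R-j)`. For the exponential law of rate `c`,
`F(t) = 1 - e^{-ct}`, and each term is a Beta integral:
`C(R, j) ∫₀^∞ (1 - e^{-ct})^j e^{-(R-j)ct} dt = C(R, j) j! (R-j-1)! / (c R!) = 1 / (c (R-j))`.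
The layer-cake formula then gives `E[X_(r+1)] = c⁻¹ ∑_{k=R-r}^{R} 1/k`, i.e. `λ α_{r+1}`.
-/

open Real Finset

section OrderStatistics

variable {R : ℕ}

lemma orderStat_le_iff (x : Fin R → ℝ) (r : Fin R) (t : ℝ) :
    orderStat x r ≤ t ↔ (r : ℕ) < #(univ.filter (x · ≤ t)) := by
  have hcard : #(univ.filter ((x ∘ Tuple.sort x) · ≤ t)) = #(univ.filter (x · ≤ t)) :=
    card_equiv (Tuple.sort x) (by simp)
  rw [← hcard, Tuple.lt_card_le_iff_apply_le_of_monotone (Tuple.monotone_sort x)]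
  rfl

lemma lt_orderStat_iff (x : Fin R → ℝ) (r : Fin R) (t : ℝ) :
    t < orderStat x r ↔ #(univ.filter (x · ≤ t)) ≤ r := by
  rw [← not_le, orderStat_le_iff, not_lt]

lemma measurable_card_filter_le (t : ℝ) :
    Measurable fun x : Fin R → ℝ => #(univ.filter (x · ≤ t)) := by
  simp_rw [card_filter]
  exact Finset.measurable_sum _ fun i _ =>
    Measurable.ite (measurable_pi_apply i measurableSet_Iic) measurable_const measurable_const

lemma measurable_orderStat (r : Fin R) : Measurable fun x : Fin R → ℝ => orderStat x r := by
  refine measurable_of_Iic fun t => ?_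
  have : (fun x => orderStat x r) ⁻¹' Set.Iic t
      = (fun x => #(univ.filter (x · ≤ t))) ⁻¹' {n | (r : ℕ) < n} := by
    ext x
    simp [orderStat_le_iff]
  rw [this]
  exact measurable_card_filter_le t trivial

end OrderStatistics

section IIDSample

variable {R : ℕ} (ν : Measure ℝ) [SigmaFinite ν]

lemma setOf_filter_le_eq_pi (t : ℝ) (S : Finset (Fin R)) :
    {x : Fin R → ℝ | univ.filter (x · ≤ t) = S}
      = Set.univ.pi fun i => if i ∈ S then Set.Iic t else Set.Ioi t := by
  ext x
  simp only [Set.mem_pi, Set.mem_univ, true_implies, Finset.ext_iff,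
    mem_filter, mem_univ, true_and]
  refine forall_congr' fun i => ?_
  split_ifs with hi <;> simp [hi]

lemma pi_setOf_filter_le_eq (t : ℝ) (S : Finset (Fin R)) :
    Measure.pi (fun _ => ν) {x | univ.filter (x · ≤ t) = S}
      = ν (Set.Iic t) ^ #S * ν (Set.Ioi t) ^ (R - #S) := by
  rw [setOf_filter_le_eq_pi, Measure.pi_pi]
  simp [apply_ite (f := ν), prod_ite, filter_not, ← compl_eq_univ_sdiff, card_compl]

lemma pi_setOf_card_filter_le_eq (t : ℝ) (j : ℕ) :
    Measure.pi (fun _ => ν) {x : Fin R → ℝ | #(univ.filter (x · ≤ t)) = j}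
      = R.choose j * (ν (Set.Iic t) ^ j * ν (Set.Ioi t) ^ (R - j)) := by
  have hunion : {x : Fin R → ℝ | #(univ.filter (x · ≤ t)) = j}
      = ⋃ S ∈ powersetCard j (univ : Finset (Fin R)), {x | univ.filter (x · ≤ t) = S} := by
    ext x
    simp
  rw [hunion, measure_biUnion_finset]
  · rw [sum_congr rfl fun S hS => by rw [pi_setOf_filter_le_eq, (mem_powersetCard_univ.1 hS)],
      sum_const, card_powersetCard, card_univ, Fintype.card_fin, nsmul_eq_mul]
  · intro S _ S' _ hne
    exact Set.disjoint_left.2 fun x hS hS' => hne (hS.symm.trans hS')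
  · intro S _
    rw [setOf_filter_le_eq_pi]
    exact MeasurableSet.univ_pi fun i => by split_ifs <;> measurability

lemma pi_setOf_lt_orderStat (r : Fin R) (t : ℝ) :
    Measure.pi (fun _ => ν) {x | t < orderStat x r}
      = ∑ j ∈ range (r + 1), R.choose j * (ν (Set.Iic t) ^ j * ν (Set.Ioi t) ^ (R - j)) := by
  have hunion : {x : Fin R → ℝ | t < orderStat x r}
      = ⋃ j ∈ range (r + 1), {x | #(univ.filter (x · ≤ t)) = j} := by
    ext x
    simp [lt_orderStat_iff]
  rw [hunion, measure_biUnion_finset]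
  · exact sum_congr rfl fun j _ => pi_setOf_card_filter_le_eq ν t j
  · intro j _ j' _ hne
    exact Set.disjoint_left.2 fun x hj hj' => hne (hj.symm.trans hj')
  · exact fun j _ => measurable_card_filter_le t (measurableSet_singleton j)

lemma ae_nonneg_orderStat (hν : ∀ᵐ y ∂ν, 0 ≤ y) (r : Fin R) :
    ∀ᵐ x ∂Measure.pi (fun _ => ν), 0 ≤ orderStat x r :=
  (Filter.eventually_all.2 fun _ => Measure.tendsto_eval_ae_ae.eventually hν).mono
    fun x (hx : ∀ i, 0 ≤ x i) => hx _

end IIDSample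

section Exponential

variable {c : ℝ} (hc : 0 < c)
include hc

lemma exp_neg_mul_le_one {t : ℝ} (ht : 0 ≤ t) : exp (-(c * t)) ≤ 1 :=
  exp_le_one_iff.2 (neg_nonpos.2 (mul_nonneg hc.le ht))

lemma expMeasure_Iic {t : ℝ} (ht : 0 ≤ t) :
    expMeasure c (Set.Iic t) = ENNReal.ofReal (1 - exp (-(c * t))) := by
  have := isProbabilityMeasure_expMeasure hc
  rw [← ofReal_cdf, cdf_expMeasure_eq hc, if_pos ht]

lemma expMeasure_Ioi {t : ℝ} (ht : 0 ≤ t) :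
    expMeasure c (Set.Ioi t) = ENNReal.ofReal (exp (-(c * t))) := by
  have := isProbabilityMeasure_expMeasure hc
  rw [← Set.compl_Iic, prob_compl_eq_one_sub measurableSet_Iic, expMeasure_Iic hc ht,
    ← ENNReal.ofReal_one, ← ENNReal.ofReal_sub _ (sub_nonneg.2 (exp_neg_mul_le_one hc ht)),
    sub_sub_cancel]

lemma ae_nonneg_expMeasure : ∀ᵐ y ∂expMeasure c, 0 ≤ y := by
  have h : expMeasure c (Set.Iic 0) = 0 := by simpa using expMeasure_Iic hc (le_refl 0)
  exact measure_mono_null (fun y (hy : ¬ 0 ≤ y) => Set.mem_Iic.2 (not_le.1 hy).le) h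

lemma integrableOn_one_sub_exp_pow_mul_exp_pow (j m : ℕ) :
    IntegrableOn (fun t => (1 - exp (-(c * t))) ^ j * exp (-(c * t)) ^ (m + 1)) (Set.Ioi 0) := by
  refine (exp_neg_integrableOn_Ioi 0 hc).mono' (by fun_prop) ?_
  filter_upwards [ae_restrict_mem measurableSet_Ioi] with t ht
  have hexp_le := exp_neg_mul_le_one hc ht.out.le
  rw [norm_mul, norm_pow, norm_pow, Real.norm_of_nonneg (sub_nonneg.2 hexp_le),
    Real.norm_of_nonneg (exp_pos _).le]
  calc (1 - exp (-(c * t))) ^ j * exp (-(c * t)) ^ (m + 1)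
      ≤ 1 * exp (-(c * t)) ^ 1 := by
        gcongr ?_ * ?_
        · exact pow_le_one₀ (sub_nonneg.2 hexp_le) (by linarith [exp_pos (-(c * t))])
        · exact pow_le_pow_of_le_one (exp_pos _).le hexp_le (by omega)
    _ = exp (-c * t) := by ring_nf

open Nat in
lemma integral_one_sub_exp_pow_mul_exp_pow (j m : ℕ) :
    ∫ t in Set.Ioi 0, (1 - exp (-(c * t))) ^ j * exp (-(c * t)) ^ (m + 1)
      = j ! * m ! / (c * (m + 1 + j)!) := by
  induction j generalizing m with
  | zero =>
    have hexp (t : ℝ) : (1 - exp (-(c * t))) ^ 0 * exp (-(c * t)) ^ (m + 1)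
        = exp (-((m + 1) * c) * t) := by
      rw [pow_zero, one_mul, ← exp_nat_mul]
      push_cast
      ring_nf
    simp_rw [hexp]
    rw [integral_exp_mul_Ioi (by simp only [neg_lt_zero]; positivity), mul_zero, exp_zero,
      add_zero, factorial_zero, factorial_succ]
    push_cast
    field_simp
  | succ j ih =>
    have hsplit (t : ℝ) : (1 - exp (-(c * t))) ^ (j + 1) * exp (-(c * t)) ^ (m + 1)
        = (1 - exp (-(c * t))) ^ j * exp (-(c * t)) ^ (m + 1)
          - (1 - exp (-(c * t))) ^ j * exp (-(c * t)) ^ (m + 1 + 1) := by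
      ring
    simp_rw [hsplit]
    rw [integral_sub (integrableOn_one_sub_exp_pow_mul_exp_pow hc j m)
      (integrableOn_one_sub_exp_pow_mul_exp_pow hc j (m + 1)), ih, ih,
      show m + 1 + 1 + j = m + 1 + j + 1 by omega, show m + 1 + (j + 1) = m + 1 + j + 1 by omega]
    push_cast [factorial_succ]
    field_simp
    ring

open Nat in
lemma choose_mul_integral_one_sub_exp_pow_mul_exp_pow {R j : ℕ} (hj : j < R) :
    R.choose j * ∫ t in Set.Ioi 0, (1 - exp (-(c * t))) ^ j * exp (-(c * t)) ^ (R - j)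
      = 1 / (c * (R - j : ℕ)) := by
  obtain ⟨m, rfl⟩ : ∃ m, R = m + 1 + j := ⟨R - j - 1, by omega⟩
  have hfac : ((m + 1 + j).choose j * (m + 1)! * j ! : ℝ) = (m + 1 + j)! := by
    exact_mod_cast add_choose_mul_factorial_mul_factorial (m + 1) j
  have hchoose : ((m + 1 + j).choose j : ℝ) ≠ 0 :=
    Nat.cast_ne_zero.2 (choose_pos (by omega)).ne'
  rw [Nat.add_sub_cancel, integral_one_sub_exp_pow_mul_exp_pow hc, ← hfac, factorial_succ]
  push_cast
  field_simp

lemma lintegral_orderStat_pi_expMeasure {R : ℕ} (r : Fin R) :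
    ∫⁻ x, ENNReal.ofReal (orderStat x r) ∂Measure.pi (fun _ => expMeasure c)
      = ENNReal.ofReal (∑ j ∈ range (r + 1), 1 / (c * (R - j : ℕ))) := by
  have := isProbabilityMeasure_expMeasure hc
  set g : ℕ → ℕ → ℝ → ℝ := fun j k t => (1 - exp (-(c * t))) ^ j * exp (-(c * t)) ^ k
  have hsurvival : ∀ t ∈ Set.Ioi (0 : ℝ),
      Measure.pi (fun _ => expMeasure c) {x | t < orderStat x r}
        = ∑ j ∈ range (r + 1), ENNReal.ofReal (R.choose j * g j (R - j) t) := by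
    intro t ht
    have hS : 0 ≤ exp (-(c * t)) := (exp_pos _).le
    have hF : 0 ≤ 1 - exp (-(c * t)) := sub_nonneg.2 (exp_neg_mul_le_one hc ht.out.le)
    rw [pi_setOf_lt_orderStat]
    refine sum_congr rfl fun j _ => ?_
    rw [expMeasure_Iic hc ht.out.le, expMeasure_Ioi hc ht.out.le, ← ENNReal.ofReal_pow hF,
      ← ENNReal.ofReal_pow hS, ← ENNReal.ofReal_mul (by positivity), ← ENNReal.ofReal_natCast,
      ← ENNReal.ofReal_mul (by positivity)]
  rw [lintegral_eq_lintegral_meas_lt _ (ae_nonneg_orderStat _ (ae_nonneg_expMeasure hc) r)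
    (measurable_orderStat r).aemeasurable, setLIntegral_congr_fun measurableSet_Ioi hsurvival,
    lintegral_finsetSum _ fun j _ => by fun_prop,
    ENNReal.ofReal_sum_of_nonneg fun j _ => by positivity]
  refine sum_congr rfl fun j hj => ?_
  obtain ⟨m, hm⟩ : ∃ m, R - j = m + 1 := ⟨R - j - 1, by have := r.isLt; simp at hj; omega⟩
  rw [← choose_mul_integral_one_sub_exp_pow_mul_exp_pow hc (by omega), ← integral_const_mul,
    ofReal_integral_eq_lintegral_ofReal]
  · exact (hm ▸ integrableOn_one_sub_exp_pow_mul_exp_pow hc j m).const_mul _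
  · filter_upwards [ae_restrict_mem measurableSet_Ioi] with t ht
    have hF : 0 ≤ 1 - exp (-(c * t)) := sub_nonneg.2 (exp_neg_mul_le_one hc ht.out.le)
    positivity

lemma integral_orderStat_pi_expMeasure {R : ℕ} (r : Fin R) :
    ∫ x, orderStat x r ∂Measure.pi (fun _ => expMeasure c)
      = c⁻¹ * ∑ k ∈ Icc (R - r) R, (1 : ℝ) / k := by
  have := isProbabilityMeasure_expMeasure hc
  rw [integral_eq_lintegral_of_nonneg_ae (ae_nonneg_orderStat _ (ae_nonneg_expMeasure hc) r)
    (measurable_orderStat r).aestronglyMeasurable, lintegral_orderStat_pi_expMeasure hc,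
    ENNReal.toReal_ofReal (sum_nonneg fun j _ => by positivity), mul_sum,
    ← Ico_add_one_right_eq_Icc, ← Nat.Ico_zero_eq_range]
  simp_rw [one_div, mul_inv]
  rw [sum_Ico_reflect (fun k : ℕ => c⁻¹ * (k : ℝ)⁻¹) _ (by omega), Nat.add_sub_add_right,
    Nat.sub_zero]

end Exponential

/-- Unbiasedness of the SAWP estimator (equations (3)–(4) of the paper): for `R` i.i.d.
exponential random variables with mean `λ` (rate `1/λ`), the scaled order statistic
`X_(r₀)/α_{r₀}` with `α_{r₀} = Σ_{k=R−r₀+1}^{R} 1/k` has expectation `λ`. -/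
theorem sawp_unbiased
    {Ω : Type*} [MeasurableSpace Ω] (μ : Measure Ω) [IsProbabilityMeasure μ]
    {R : ℕ} (lam : ℝ) (hlam : 0 < lam) (X : Fin R → Ω → ℝ)
    (hindep : iIndepFun X μ)
    (hdist : ∀ i, Measure.map (X i) μ = expMeasure (1 / lam))
    (r₀ : ℕ) (hr1 : 1 ≤ r₀) (hrR : r₀ ≤ R) :
    ∫ ω, orderStat (fun i => X i ω) ⟨r₀ - 1, by omega⟩ /
        (∑ k ∈ Finset.Icc (R - r₀ + 1) R, (1 : ℝ) / k) ∂μ = lam := by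
  have hX (i : Fin R) : AEMeasurable (X i) μ :=
    .of_map_ne_zero <| by
      rw [hdist i]
      exact (isProbabilityMeasure_expMeasure (by positivity)).ne_zero
  have hlaw : μ.map (fun ω i => X i ω) = Measure.pi fun _ => expMeasure (1 / lam) := by
    simp_rw [(iIndepFun_iff_map_fun_eq_pi_map hX).1 hindep, hdist]
  have hα : 0 < ∑ k ∈ Icc (R - r₀ + 1) R, (1 : ℝ) / k :=
    sum_pos (fun k hk => one_div_pos.2 (Nat.cast_pos.2 (by simp at hk; omega)))
      ⟨R, by simp; omega⟩
  rw [integral_div, ← integral_map (aemeasurable_pi_lambda _ hX)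
    (measurable_orderStat _).aestronglyMeasurable, hlaw,
    integral_orderStat_pi_expMeasure (by positivity), Fin.val_mk,
    show R - (r₀ - 1) = R - r₀ + 1 by omega]
  field_simp
end
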